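/- arXiv:1809.00967 — 2 statements merged into one kernel-verified Lean document; each statement's English description precedes it below -/
import Mathlib

section
/- Let A, B be maximal monotone operators on a real Hilbert space X, let λ > 0, and let (y_n, a_n, x_n, b_n) be sequences generated by the Douglas–Rachford method from initial points x₀, b₀ ∈ X. If there exists z ∈ X with 0 ∈ A(z) + B(z), then there exists (z*, w*) ∈ S_e(A,B) such that x_n ⇀ z* and b_n ⇀ w* weakly in X as n → ∞. -/
open Filter Topology

/-- A set-valued operator `T` on `X` (identified with its graph) is monotone. -/
def IsMonotoneOp {X : Type*} [NormedAddCommGroup X] [InnerProductSpace ℝ X]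
    (T : Set (X × X)) : Prop :=
  ∀ p ∈ T, ∀ q ∈ T, (0 : ℝ) ≤ inner ℝ (p.1 - q.1) (p.2 - q.2)

/-- `T` is maximal monotone: monotone and maximal w.r.t. inclusion among monotone operators. -/
def IsMaxMonotone {X : Type*} [NormedAddCommGroup X] [InnerProductSpace ℝ X]
    (T : Set (X × X)) : Prop :=
  IsMonotoneOp T ∧ ∀ S : Set (X × X), IsMonotoneOp S → T ⊆ S → S = T

/-- Weak convergence of a sequence in an inner product space. -/
def WeakConv {X : Type*} [NormedAddCommGroup X] [InnerProductSpace ℝ X]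
    (u : ℕ → X) (l : X) : Prop :=
  ∀ v : X, Tendsto (fun n => (inner ℝ (u n) v : ℝ)) atTop (𝓝 (inner ℝ l v))

/-- The extended solution set `S_e(A,B) = {(z,w) : w ∈ B(z), -w ∈ A(z)}`. -/
def Se {X : Type*} [NormedAddCommGroup X] [InnerProductSpace ℝ X]
    (A B : Set (X × X)) : Set (X × X) :=
  {p | (p.1, p.2) ∈ B ∧ (p.1, -p.2) ∈ A}

/-- The sequences `(y n, a n, x n, b n)` (for `n ≥ 1`) are generated by the
Douglas–Rachford method with stepsize `lam` from initial points `x 0`, `b 0`: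
`a n ∈ A (y n)`, `lam • a n + y n = x (n-1) - lam • b (n-1)`,
`b n ∈ B (x n)`, `lam • b n + x n = y n + lam • b (n-1)`. -/
def IsDR {X : Type*} [NormedAddCommGroup X] [InnerProductSpace ℝ X]
    (A B : Set (X × X)) (lam : ℝ) (y a x b : ℕ → X) : Prop :=
  ∀ n, 1 ≤ n →
    (y n, a n) ∈ A ∧ lam • a n + y n = x (n - 1) - lam • b (n - 1) ∧
    (x n, b n) ∈ B ∧ lam • b n + x n = y n + lam • b (n - 1)

/-!
The points `(x n, lam • b n)` of the `L²` product `X × X` are Fejér monotone with respect to the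
image of `S_e(A,B)`: expanding the Douglas–Rachford relations, the squared distance to such a point
drops at each step by `‖x n - y (n + 1)‖²` plus two terms that are nonnegative by monotonicity of
`A` and `B`. So the residuals `x n - y (n + 1)` tend to zero, the iterates are bounded, and by
Opial's lemma it remains to show that weak cluster points lie in `S_e(A,B)`. Along a subsequence,
monotonicity of `B` and of `A` (through `y (n + 1) ≈ x n`, `a (n + 1) ≈ -b n`) squeezes the cross
terms `⟪x n - x m, b n - b m⟫` to zero, which forces `⟪x n, b n⟫ → ⟪z, w⟫`; this is exactly what
the demiclosedness of maximal monotone graphs needs to put `(z, w)` in `B` and `(z, -w)` in `A`.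
-/

open scoped InnerProductSpace

theorem norm_le_of_antitone_norm_sub {G : Type*} [SeminormedAddCommGroup G] {u : ℕ → G} {s : G}
    (h : Antitone fun n => ‖u n - s‖) (n : ℕ) :
    ‖u n‖ ≤ ‖s‖ + ‖u 0 - s‖ :=
  calc ‖u n‖ ≤ ‖s‖ + ‖u n - s‖ := by simpa using norm_add_le s (u n - s)
    _ ≤ ‖s‖ + ‖u 0 - s‖ := by gcongr; exact h (Nat.zero_le n)

section WeakConvergence

variable {E F : Type*} [NormedAddCommGroup E] [InnerProductSpace ℝ E]
  [NormedAddCommGroup F] [InnerProductSpace ℝ F] {u u' : ℕ → E} {l : E}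

theorem WeakConv.comp (h : WeakConv u l) {σ : ℕ → ℕ} (hσ : Tendsto σ atTop atTop) :
    WeakConv (u ∘ σ) l :=
  fun v => (h v).comp hσ

theorem WeakConv.neg (h : WeakConv u l) : WeakConv (-u) (-l) :=
  fun v => by simpa only [Pi.neg_apply, inner_neg_left] using (h v).neg

theorem WeakConv.const_smul (h : WeakConv u l) (c : ℝ) : WeakConv (c • u) (c • l) :=
  fun v => by simpa only [Pi.smul_apply, real_inner_smul_left] using (h v).const_mul c

theorem WeakConv.of_tendsto_norm_sub (h : WeakConv u l)
    (huu' : Tendsto (fun n => ‖u n - u' n‖) atTop (𝓝 0)) : WeakConv u' l := fun v => by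
  have hsmall : Tendsto (fun n => ⟪u n - u' n, v⟫_ℝ) atTop (𝓝 0) :=
    squeeze_zero_norm (fun n => norm_inner_le_norm _ _) (by simpa using huu'.mul_const ‖v‖)
  simpa [inner_sub_left] using (h v).sub hsmall

theorem WeakConv.fst {u : ℕ → WithLp 2 (E × F)} {l : WithLp 2 (E × F)} (h : WeakConv u l) :
    WeakConv (fun n => (u n).fst) l.fst :=
  fun v => by simpa using h (WithLp.toLp 2 (v, 0))

theorem WeakConv.snd {u : ℕ → WithLp 2 (E × F)} {l : WithLp 2 (E × F)} (h : WeakConv u l) :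
    WeakConv (fun n => (u n).snd) l.snd :=
  fun v => by simpa using h (WithLp.toLp 2 (0, v))

theorem exists_strictMono_weakConv [CompleteSpace E] {C : ℝ} (hu : ∀ n, ‖u n‖ ≤ C) :
    ∃ σ : ℕ → ℕ, StrictMono σ ∧ ∃ l, WeakConv (u ∘ σ) l := by
  set K := (Submodule.span ℝ (Set.range u)).topologicalClosure
  have huK : ∀ n, u n ∈ K := fun n =>
    Submodule.le_topologicalClosure _ (Submodule.subset_span (Set.mem_range_self n))
  have : TopologicalSpace.SeparableSpace K := by
    have := ((Set.countable_range u).isSeparable.span (R := ℝ)).closure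
    rw [← Submodule.topologicalClosure_coe] at this
    exact this.separableSpace
  -- Sequential Banach–Alaoglu in the separable space `K`, transported by the Riesz map.
  obtain ⟨φ, -, σ, hσ, hφ⟩ := WeakDual.isSeqCompact_closedBall ℝ K 0 C
    (x := fun n => StrongDual.toWeakDual (InnerProductSpace.toDual ℝ K ⟨u n, huK n⟩))
    fun n => by simpa using hu n
  refine ⟨σ, hσ, ((InnerProductSpace.toDual ℝ K).symm (WeakDual.toStrongDual φ) : K), fun v => ?_⟩
  rw [← Submodule.inner_orthogonalProjectionOnto_eq_of_mem_left,
    InnerProductSpace.toDual_symm_apply]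
  exact (((WeakDual.eval_continuous (K.orthogonalProjectionOnto v)).tendsto φ).comp hφ).congr
    fun n => Submodule.inner_orthogonalProjectionOnto_eq_of_mem_left ⟨u (σ n), huK _⟩ v

theorem WeakConv.eq_of_tendsto_norm_sub {p q : E} {σ τ : ℕ → ℕ} (hσ : Tendsto σ atTop atTop)
    (hτ : Tendsto τ atTop atTop) (hp : WeakConv (u ∘ σ) p) (hq : WeakConv (u ∘ τ) q) {rp rq : ℝ}
    (hup : Tendsto (fun n => ‖u n - p‖) atTop (𝓝 rp))
    (huq : Tendsto (fun n => ‖u n - q‖) atTop (𝓝 rq)) : p = q := by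
  -- `⟪u n, p - q⟫` is an affine combination of `‖u n - p‖²` and `‖u n - q‖²`, hence converges.
  have hc : Tendsto (fun n => ⟪u n, p - q⟫_ℝ) atTop
      (𝓝 ((rq ^ 2 - rp ^ 2 - ‖q‖ ^ 2 + ‖p‖ ^ 2) / 2)) := by
    refine ((((huq.pow 2).sub (hup.pow 2)).sub_const (‖q‖ ^ 2)).add_const (‖p‖ ^ 2)).div_const 2
      |>.congr fun n => ?_
    rw [norm_sub_sq_real, norm_sub_sq_real, inner_sub_right]
    ring
  have hpq : ⟪p, p - q⟫_ℝ = ⟪q, p - q⟫_ℝ :=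
    (tendsto_nhds_unique (hp (p - q)) (hc.comp hσ)).trans
      (tendsto_nhds_unique (hq (p - q)) (hc.comp hτ)).symm
  rw [← sub_eq_zero, ← inner_sub_left, inner_self_eq_zero, sub_eq_zero] at hpq
  exact hpq

/-- Opial's lemma. -/
theorem exists_weakConv_of_antitone_norm_sub [CompleteSpace E] {S : Set E} (hS : S.Nonempty)
    (hfejer : ∀ s ∈ S, Antitone fun n => ‖u n - s‖)
    (hclust : ∀ σ : ℕ → ℕ, Tendsto σ atTop atTop → ∀ l, WeakConv (u ∘ σ) l → l ∈ S) :
    ∃ s ∈ S, WeakConv u s := by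
  obtain ⟨s₀, hs₀⟩ := hS
  have hlim : ∀ s ∈ S, Tendsto (fun n => ‖u n - s‖) atTop (𝓝 (⨅ n, ‖u n - s‖)) :=
    fun s hs => tendsto_atTop_ciInf (hfejer s hs) ⟨0, by rintro _ ⟨n, rfl⟩; positivity⟩
  have hsub : ∀ σ : ℕ → ℕ, Tendsto σ atTop atTop →
      ∃ τ : ℕ → ℕ, StrictMono τ ∧ ∃ l ∈ S, WeakConv (u ∘ σ ∘ τ) l := by
    intro σ hσ
    obtain ⟨τ, hτ, l, hl⟩ :=
      exists_strictMono_weakConv fun n => norm_le_of_antitone_norm_sub (hfejer s₀ hs₀) (σ n)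
    exact ⟨τ, hτ, l, hclust _ (hσ.comp hτ.tendsto_atTop) l hl, hl⟩
  obtain ⟨τ₀, hτ₀, l, hl, hul⟩ := hsub id tendsto_id
  refine ⟨l, hl, fun v => tendsto_of_subseq_tendsto fun σ hσ => ?_⟩
  obtain ⟨τ, hτ, l', hl', hul'⟩ := hsub σ hσ
  obtain rfl : l' = l := hul'.eq_of_tendsto_norm_sub (hσ.comp hτ.tendsto_atTop)
    hτ₀.tendsto_atTop hul (hlim l' hl') (hlim l hl)
  exact ⟨τ, hul' v⟩

end WeakConvergence

theorem tendsto_zero_of_add_le_of_nonneg {f g : ℕ → ℝ} (hf : ∀ n, 0 ≤ f n) (hg : ∀ n, 0 ≤ g n)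
    (h : ∀ n, f (n + 1) + g n ≤ f n) : Tendsto g atTop (𝓝 0) := by
  have hanti : Antitone f := antitone_nat_of_succ_le fun n => by linarith [h n, hg n]
  have hlim := tendsto_atTop_ciInf hanti ⟨0, by rintro _ ⟨n, rfl⟩; exact hf n⟩
  have hdiff : Tendsto (fun n => f n - f (n + 1)) atTop (𝓝 0) := by
    simpa using hlim.sub (hlim.comp (tendsto_add_atTop_nat 1))
  exact squeeze_zero hg (fun n => by linarith [h n]) hdiff

theorem tendsto_inner_of_tendsto_norm_sub {X : Type*} [NormedAddCommGroup X]
    [InnerProductSpace ℝ X] {p q p' q' : ℕ → X} {L Cp Cq : ℝ} (hp : ∀ k, ‖p k‖ ≤ Cp)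
    (hq : ∀ k, ‖q k‖ ≤ Cq) (hpq : Tendsto (fun k => ⟪p k, q k⟫_ℝ) atTop (𝓝 L))
    (hpp' : Tendsto (fun k => ‖p k - p' k‖) atTop (𝓝 0))
    (hqq' : Tendsto (fun k => ‖q k - q' k‖) atTop (𝓝 0)) :
    Tendsto (fun k => ⟪p' k, q' k⟫_ℝ) atTop (𝓝 L) := by
  have small : ∀ {f g : ℕ → X}, Tendsto (fun k => ‖f k‖ * ‖g k‖) atTop (𝓝 0) →
      Tendsto (fun k => ⟪f k, g k⟫_ℝ) atTop (𝓝 0) :=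
    fun h => squeeze_zero_norm (fun k => norm_inner_le_norm _ _) h
  have h₁ := small (f := fun k => p k - p' k) (g := q) <| squeeze_zero
    (fun k => by positivity) (fun k => mul_le_mul_of_nonneg_left (hq k) (norm_nonneg _))
    (by simpa using hpp'.mul_const Cq)
  have h₂ := small (f := p) (g := fun k => q k - q' k) <| squeeze_zero
    (fun k => by positivity) (fun k => mul_le_mul_of_nonneg_right (hp k) (norm_nonneg _))
    (by simpa using hqq'.const_mul Cp)
  have h₃ := small (f := fun k => p k - p' k) (g := fun k => q k - q' k)
    (by simpa using hpp'.mul hqq')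
  refine (by simpa using ((hpq.sub h₁).sub h₂).add h₃ : Tendsto _ atTop (𝓝 L)).congr fun k => ?_
  simp only [inner_sub_left, inner_sub_right]
  ring

section MonotoneOperator

variable {X : Type*} [NormedAddCommGroup X] [InnerProductSpace ℝ X] {T : Set (X × X)}
  {p q : ℕ → X} {P Q : X}

theorem IsMaxMonotone.mem_of_forall_inner_nonneg (hT : IsMaxMonotone T) {r : X × X}
    (hr : ∀ s ∈ T, 0 ≤ ⟪r.1 - s.1, r.2 - s.2⟫_ℝ) : r ∈ T := by
  have hmono : IsMonotoneOp (insert r T) := by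
    rintro s (rfl | hs) t (rfl | ht)
    · simp
    · exact hr t ht
    · simpa only [← neg_sub s.1, ← neg_sub s.2, inner_neg_neg] using hr s hs
    · exact hT.1 s hs t ht
  rw [← hT.2 _ hmono (Set.subset_insert r T)]
  exact Set.mem_insert r T

theorem tendsto_inner_sub_of_weakConv (hp : WeakConv p P) (hq : WeakConv q Q)
    {L : ℝ} (hL : Tendsto (fun k => ⟪p k, q k⟫_ℝ) atTop (𝓝 L)) (s t : X) :
    Tendsto (fun k => ⟪p k - s, q k - t⟫_ℝ) atTop
      (𝓝 (L - ⟪P, t⟫_ℝ - ⟪Q, s⟫_ℝ + ⟪s, t⟫_ℝ)) := by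
  refine (((hL.sub (hp t)).sub (hq s)).add_const ⟪s, t⟫_ℝ).congr fun k => ?_
  simp only [inner_sub_left, inner_sub_right, real_inner_comm s (q k)]
  ring

theorem IsMaxMonotone.mem_of_weakConv (hT : IsMaxMonotone T)
    (hmem : ∀ᶠ k in atTop, (p k, q k) ∈ T) (hp : WeakConv p P) (hq : WeakConv q Q)
    (hpq : Tendsto (fun k => ⟪p k, q k⟫_ℝ) atTop (𝓝 ⟪P, Q⟫_ℝ)) : (P, Q) ∈ T := by
  refine hT.mem_of_forall_inner_nonneg fun s hs => ?_
  have hlim := tendsto_inner_sub_of_weakConv hp hq hpq s.1 s.2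
  have hval : ⟪P, Q⟫_ℝ - ⟪P, s.2⟫_ℝ - ⟪Q, s.1⟫_ℝ + ⟪s.1, s.2⟫_ℝ = ⟪P - s.1, Q - s.2⟫_ℝ := by
    simp only [inner_sub_left, inner_sub_right, real_inner_comm s.1 Q]
    ring
  exact hval ▸ ge_of_tendsto hlim (hmem.mono fun k hk => hT.1 _ hk s hs)

theorem IsMonotoneOp.inner_eq_of_weakConv (hT : IsMonotoneOp T)
    (hmem : ∀ᶠ k in atTop, (p k, q k) ∈ T) (hp : WeakConv p P) (hq : WeakConv q Q) {L : ℝ}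
    (hL : Tendsto (fun k => ⟪p k, q k⟫_ℝ) atTop (𝓝 L)) {ε : ℕ → ℝ}
    (hε : Tendsto ε atTop (𝓝 0)) (hle : ∀ k j, ⟪p k - p j, q k - q j⟫_ℝ ≤ ε k + ε j) :
    L = ⟪P, Q⟫_ℝ := by
  -- `d j` is the limit of `⟪p k - p j, q k - q j⟫` as `k → ∞`, squeezed between `0` and `ε j`.
  set d : ℕ → ℝ := fun j => L - ⟪P, q j⟫_ℝ - ⟪Q, p j⟫_ℝ + ⟪p j, q j⟫_ℝ
  have hd j := tendsto_inner_sub_of_weakConv hp hq hL (p j) (q j)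
  have hd_le : ∀ j, d j ≤ ε j := fun j =>
    le_of_tendsto_of_tendsto (hd j) (by simpa using hε.add_const (ε j))
      (Eventually.of_forall fun k => hle k j)
  have hd_nonneg : ∀ᶠ j in atTop, 0 ≤ d j :=
    hmem.mono fun j hj => ge_of_tendsto (hd j) (hmem.mono fun k hk => hT _ hk _ hj)
  have hd_lim : Tendsto d atTop (𝓝 (L - ⟪Q, P⟫_ℝ - ⟪P, Q⟫_ℝ + L)) := by
    refine (((tendsto_const_nhds.sub (hq P)).sub (hp Q)).add hL).congr fun j => ?_
    simp only [d, real_inner_comm P (q j), real_inner_comm Q (p j)]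
  have h₀ := ge_of_tendsto hd_lim hd_nonneg
  have h₁ := le_of_tendsto_of_tendsto hd_lim hε (Eventually.of_forall hd_le)
  linarith [real_inner_comm P Q]

end MonotoneOperator

def scaledPair {X : Type*} [NormedAddCommGroup X] [InnerProductSpace ℝ X] (lam : ℝ) (p : X × X) :
    WithLp 2 (X × X) :=
  WithLp.toLp 2 (p.1, lam • p.2)

section ScaledPair

variable {X : Type*} [NormedAddCommGroup X] [InnerProductSpace ℝ X] {lam : ℝ}

theorem norm_scaledPair_sub_sq (p q : X × X) :
    ‖scaledPair lam p - scaledPair lam q‖ ^ 2 = ‖p.1 - q.1‖ ^ 2 + lam ^ 2 * ‖p.2 - q.2‖ ^ 2 := by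
  rw [WithLp.prod_norm_sq_eq_of_L2]
  simp [scaledPair, ← smul_sub, norm_smul, mul_pow]

theorem WeakConv.of_scaledPair (hlam : lam ≠ 0) {x b : ℕ → X} {l : WithLp 2 (X × X)}
    (h : WeakConv (fun n => scaledPair lam (x n, b n)) l) :
    WeakConv x l.fst ∧ WeakConv b (lam⁻¹ • l.snd) :=
  ⟨h.fst, by convert h.snd.const_smul lam⁻¹ using 1; ext n; simp [scaledPair, hlam]⟩

theorem scaledPair_fst_inv_smul_snd (hlam : lam ≠ 0) (l : WithLp 2 (X × X)) :
    scaledPair lam (l.fst, lam⁻¹ • l.snd) = l := by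
  simp only [scaledPair, smul_inv_smul₀ hlam]
  rfl

end ScaledPair

namespace IsDR

variable {X : Type*} [NormedAddCommGroup X] [InnerProductSpace ℝ X] {A B : Set (X × X)}
  {lam : ℝ} {y a x b : ℕ → X}

theorem succ (h : IsDR A B lam y a x b) (n : ℕ) :
    (y (n + 1), a (n + 1)) ∈ A ∧ lam • a (n + 1) + y (n + 1) = x n - lam • b n ∧
      (x (n + 1), b (n + 1)) ∈ B ∧ lam • b (n + 1) + x (n + 1) = y (n + 1) + lam • b n :=
  h (n + 1) n.succ_pos

theorem norm_sq_eq (h : IsDR A B lam y a x b) (n : ℕ) (z w : X) :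
    ‖x n - z‖ ^ 2 + lam ^ 2 * ‖b n - w‖ ^ 2 =
      ‖x (n + 1) - z‖ ^ 2 + lam ^ 2 * ‖b (n + 1) - w‖ ^ 2 + ‖x n - y (n + 1)‖ ^ 2 +
        2 * lam * ⟪x (n + 1) - z, b (n + 1) - w⟫_ℝ +
        2 * ⟪y (n + 1) - z, lam • a (n + 1) + lam • w⟫_ℝ := by
  obtain ⟨-, ha, -, hb⟩ := h.succ n
  rw [eq_sub_of_add_eq ha, eq_sub_of_add_eq hb.symm]
  simp only [← real_inner_self_eq_norm_sq, inner_sub_left, inner_sub_right, inner_add_left,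
    inner_add_right, real_inner_smul_left, real_inner_smul_right]
  simp only [real_inner_comm (x n) z, real_inner_comm (x (n + 1)) z, real_inner_comm (b n) w,
    real_inner_comm (b (n + 1)) w, real_inner_comm (x n) (x (n + 1)),
    real_inner_comm (b n) (b (n + 1)), real_inner_comm (x n) (b n),
    real_inner_comm (x n) (b (n + 1)), real_inner_comm (x (n + 1)) (b n),
    real_inner_comm (x (n + 1)) (b (n + 1))]
  ring

theorem norm_sq_add_le (h : IsDR A B lam y a x b) (hA : IsMonotoneOp A) (hB : IsMonotoneOp B)
    (hlam : 0 ≤ lam) {p : X × X} (hp : p ∈ Se A B) (n : ℕ) :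
    ‖x (n + 1) - p.1‖ ^ 2 + lam ^ 2 * ‖b (n + 1) - p.2‖ ^ 2 + ‖x n - y (n + 1)‖ ^ 2 ≤
      ‖x n - p.1‖ ^ 2 + lam ^ 2 * ‖b n - p.2‖ ^ 2 := by
  obtain ⟨hyA, -, hxB, -⟩ := h.succ n
  have hBmono : 0 ≤ ⟪x (n + 1) - p.1, b (n + 1) - p.2⟫_ℝ := hB _ hxB _ hp.1
  have hAmono : 0 ≤ ⟪y (n + 1) - p.1, lam • a (n + 1) + lam • p.2⟫_ℝ := by
    rw [← smul_add, real_inner_smul_right, ← sub_neg_eq_add]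
    exact mul_nonneg hlam (hA _ hyA _ hp.2)
  rw [h.norm_sq_eq n p.1 p.2]
  have := mul_nonneg hlam hBmono
  linarith

theorem antitone_norm_scaledPair_sub (h : IsDR A B lam y a x b) (hA : IsMonotoneOp A)
    (hB : IsMonotoneOp B) (hlam : 0 ≤ lam) {p : X × X} (hp : p ∈ Se A B) :
    Antitone fun n => ‖scaledPair lam (x n, b n) - scaledPair lam p‖ := by
  refine antitone_nat_of_succ_le fun n =>
    (pow_le_pow_iff_left₀ (norm_nonneg _) (norm_nonneg _) two_ne_zero).1 ?_
  rw [norm_scaledPair_sub_sq, norm_scaledPair_sub_sq]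
  linarith [h.norm_sq_add_le hA hB hlam hp n, sq_nonneg ‖x n - y (n + 1)‖]

theorem tendsto_norm_sub_y_succ (h : IsDR A B lam y a x b) (hA : IsMonotoneOp A)
    (hB : IsMonotoneOp B) (hlam : 0 ≤ lam) {p : X × X} (hp : p ∈ Se A B) :
    Tendsto (fun n => ‖x n - y (n + 1)‖) atTop (𝓝 0) := by
  simpa using (tendsto_zero_of_add_le_of_nonneg
    (f := fun n => ‖x n - p.1‖ ^ 2 + lam ^ 2 * ‖b n - p.2‖ ^ 2) (fun n => by positivity)
    (fun n => by positivity) (h.norm_sq_add_le hA hB hlam hp)).sqrt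

theorem exists_norm_le (h : IsDR A B lam y a x b) (hA : IsMonotoneOp A) (hB : IsMonotoneOp B)
    (hlam : 0 < lam) {p : X × X} (hp : p ∈ Se A B) :
    ∃ Cx Cb : ℝ, (∀ n, ‖x n‖ ≤ Cx) ∧ ∀ n, ‖b n‖ ≤ Cb := by
  have hu := norm_le_of_antitone_norm_sub (h.antitone_norm_scaledPair_sub hA hB hlam.le hp)
  refine ⟨_, lam⁻¹ * (‖scaledPair lam p‖ + ‖scaledPair lam (x 0, b 0) - scaledPair lam p‖),
    fun n => (WithLp.norm_fst_le _ (scaledPair lam (x n, b n))).trans (hu n),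
    fun n => (le_inv_mul_iff₀ hlam).2 ?_⟩
  simpa [scaledPair, norm_smul, abs_of_pos hlam] using
    (WithLp.norm_snd_le _ (scaledPair lam (x n, b n))).trans (hu n)

theorem inner_sub_le (h : IsDR A B lam y a x b) (hA : IsMonotoneOp A) (hlam : 0 < lam)
    {Cx Cb : ℝ} (hx : ∀ n, ‖x n‖ ≤ Cx) (hb : ∀ n, ‖b n‖ ≤ Cb) (n m : ℕ) :
    ⟪x n - x m, b n - b m⟫_ℝ ≤
      (2 * Cx / lam + 2 * Cb) * ‖x n - y (n + 1)‖ +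
        (2 * Cx / lam + 2 * Cb) * ‖x m - y (m + 1)‖ := by
  set P := x n - x m
  set Q := b n - b m
  set D := (x n - y (n + 1)) - (x m - y (m + 1))
  have hmono : 0 ≤ ⟪P - D, D - lam • Q⟫_ℝ := by
    have key := hA _ (h.succ n).1 _ (h.succ m).1
    have hy : y (n + 1) - y (m + 1) = P - D := by simp only [P, D]; abel
    have ha : lam • (a (n + 1) - a (m + 1)) = D - lam • Q := by
      rw [smul_sub, eq_sub_of_add_eq (h.succ n).2.1, eq_sub_of_add_eq (h.succ m).2.1]
      simp only [D, Q, smul_sub]; abel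
    simpa only [hy, ← ha, real_inner_smul_right] using mul_nonneg hlam.le key
  have hPQ : lam * ⟪P, Q⟫_ℝ ≤ ‖D‖ * (‖P‖ + lam * ‖Q‖) := by
    have hexp : ⟪P - D, D - lam • Q⟫_ℝ
        = ⟪P, D⟫_ℝ - lam * ⟪P, Q⟫_ℝ - ‖D‖ ^ 2 + lam * ⟪D, Q⟫_ℝ := by
      simp only [inner_sub_left, inner_sub_right, real_inner_smul_right, real_inner_self_eq_norm_sq,
        real_inner_comm D P]
      ring
    have h₁ := real_inner_le_norm P D
    have h₂ := mul_le_mul_of_nonneg_left (real_inner_le_norm D Q) hlam.le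
    nlinarith [sq_nonneg ‖D‖]
  have hP : ‖P‖ ≤ 2 * Cx := (norm_sub_le _ _).trans (by linarith [hx n, hx m])
  have hQ : ‖Q‖ ≤ 2 * Cb := (norm_sub_le _ _).trans (by linarith [hb n, hb m])
  have hD : ‖D‖ ≤ ‖x n - y (n + 1)‖ + ‖x m - y (m + 1)‖ := norm_sub_le _ _
  rw [← mul_le_mul_iff_of_pos_left hlam]
  calc lam * ⟪P, Q⟫_ℝ ≤ ‖D‖ * (‖P‖ + lam * ‖Q‖) := hPQ
    _ ≤ (‖x n - y (n + 1)‖ + ‖x m - y (m + 1)‖) * (2 * Cx + lam * (2 * Cb)) := by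
      gcongr
    _ = _ := by field_simp

theorem norm_neg_sub_a_succ (h : IsDR A B lam y a x b) (hlam : 0 < lam) (n : ℕ) :
    ‖-b n - a (n + 1)‖ = lam⁻¹ * ‖x n - y (n + 1)‖ := by
  have hsmul : lam • (-b n - a (n + 1)) = -(x n - y (n + 1)) := by
    rw [smul_sub, eq_sub_of_add_eq (h.succ n).2.1]
    module
  rw [eq_inv_mul_iff_mul_eq₀ hlam.ne', ← norm_neg (x n - _), ← hsmul, norm_smul,
    Real.norm_of_nonneg hlam.le]

theorem mem_Se_of_weakConv (h : IsDR A B lam y a x b) (hA : IsMaxMonotone A)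
    (hB : IsMaxMonotone B) (hlam : 0 < lam) {Cx Cb : ℝ} (hx : ∀ n, ‖x n‖ ≤ Cx)
    (hb : ∀ n, ‖b n‖ ≤ Cb) (hres : Tendsto (fun n => ‖x n - y (n + 1)‖) atTop (𝓝 0))
    {σ : ℕ → ℕ} (hσ : Tendsto σ atTop atTop) {z w : X} (hxz : WeakConv (x ∘ σ) z)
    (hbw : WeakConv (b ∘ σ) w) : (z, w) ∈ Se A B := by
  obtain ⟨L, -, φ, hφ, hL⟩ := tendsto_subseq_of_bounded
    (Metric.isBounded_Icc (-(Cx * Cb)) (Cx * Cb)) (x := fun k => ⟪x (σ k), b (σ k)⟫_ℝ)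
    fun k => abs_le.1 <| (abs_real_inner_le_norm _ _).trans <|
      mul_le_mul (hx _) (hb _) (norm_nonneg _) ((norm_nonneg _).trans (hx 0))
  set τ := σ ∘ φ
  have hτ : Tendsto τ atTop atTop := hσ.comp hφ.tendsto_atTop
  have hxτ : WeakConv (x ∘ τ) z := hxz.comp hφ.tendsto_atTop
  have hbτ : WeakConv (b ∘ τ) w := hbw.comp hφ.tendsto_atTop
  have hresτ := hres.comp hτ
  have hmemB : ∀ᶠ k in atTop, (x (τ k), b (τ k)) ∈ B :=
    (hτ.eventually_ge_atTop 1).mono fun k hk => (h _ hk).2.2.1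
  obtain rfl : L = ⟪z, w⟫_ℝ := hB.1.inner_eq_of_weakConv hmemB hxτ hbτ hL
    (by simpa using hresτ.const_mul (2 * Cx / lam + 2 * Cb))
    fun k j => h.inner_sub_le hA.1 hlam hx hb (τ k) (τ j)
  refine ⟨hB.mem_of_weakConv hmemB hxτ hbτ hL, hA.mem_of_weakConv
    (Eventually.of_forall fun k => (h.succ (τ k)).1) (hxτ.of_tendsto_norm_sub hresτ)
    (hbτ.neg.of_tendsto_norm_sub ?_) ?_⟩
  · simpa [norm_neg_sub_a_succ h hlam] using hresτ.const_mul lam⁻¹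
  · refine tendsto_inner_of_tendsto_norm_sub (fun k => hx (τ k))
      (fun k => (norm_neg _).trans_le (hb (τ k))) ?_ hresτ ?_
    · simp only [inner_neg_right]
      exact hL.neg
    · simpa [norm_neg_sub_a_succ h hlam] using hresτ.const_mul lam⁻¹

end IsDR

/-- Main theorem, first part: `(x_n, b_n)` converges weakly to a point of `S_e(A,B)`. -/
theorem dr_weak_convergence_xb {X : Type*} [NormedAddCommGroup X] [InnerProductSpace ℝ X]
    [CompleteSpace X] (A B : Set (X × X))
    (hA : IsMaxMonotone A) (hB : IsMaxMonotone B)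
    (lam : ℝ) (hlam : 0 < lam) (y a x b : ℕ → X) (hDR : IsDR A B lam y a x b)
    (hsol : ∃ z u v : X, (z, u) ∈ A ∧ (z, v) ∈ B ∧ u + v = 0) :
    ∃ zstar wstar : X, (zstar, wstar) ∈ Se A B ∧
      WeakConv x zstar ∧ WeakConv b wstar := by
  obtain ⟨z₀, u₀, w₀, hz₀A, hz₀B, hsum⟩ := hsol
  have hSe₀ : (z₀, w₀) ∈ Se A B := ⟨hz₀B, eq_neg_of_add_eq_zero_left hsum ▸ hz₀A⟩
  have hres := hDR.tendsto_norm_sub_y_succ hA.1 hB.1 hlam.le hSe₀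
  obtain ⟨Cx, Cb, hx, hb⟩ := hDR.exists_norm_le hA.1 hB.1 hlam hSe₀
  have hclust : ∀ σ : ℕ → ℕ, Tendsto σ atTop atTop → ∀ l,
      WeakConv (fun n => scaledPair lam (x (σ n), b (σ n))) l → l ∈ scaledPair lam '' Se A B :=
    fun σ hσ l hl => ⟨(l.fst, lam⁻¹ • l.snd),
      hDR.mem_Se_of_weakConv hA hB hlam hx hb hres hσ (hl.of_scaledPair hlam.ne').1
        (hl.of_scaledPair hlam.ne').2, scaledPair_fst_inv_smul_snd hlam.ne' l⟩
  obtain ⟨_, ⟨p, hp, rfl⟩, hconv⟩ := exists_weakConv_of_antitone_norm_sub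
    ⟨_, Set.mem_image_of_mem _ hSe₀⟩
    (by rintro _ ⟨p, hp, rfl⟩; exact hDR.antitone_norm_scaledPair_sub hA.1 hB.1 hlam.le hp) hclust
  exact ⟨p.1, p.2, hp, by simpa [scaledPair, hlam.ne'] using hconv.of_scaledPair hlam.ne'⟩
end

section
/- Let A, B be maximal monotone operators on a real Hilbert space X and let (y_n, a_n, x_n, b_n) be sequences generated by the Douglas–Rachford method with stepsize λ = 1 from initial points x₀, b₀ ∈ X. If S_e(A,B) is nonempty, then the sequences (x_n) and (b_n) are bounded in X. -/
open Filter Topology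

/-!
Fix `(z, w) ∈ S_e(A,B)` and follow the governing sequence `x n + b n`.
Adding the monotonicity inequalities of `B` at `(x (n-1), b (n-1))` and of `A` at `(y n, a n)`,
both tested against the solution, gives `⟪V, U - V⟫ ≥ 0` for `U = x (n-1) + b (n-1) - (z + w)`
and `V = x n + b n - (z + w)`, hence `‖V‖ ≤ ‖U‖`: the distance of `x n + b n` to `z + w` is
nonincreasing. Monotonicity of `B` once more gives `⟪x n - z, b n - w⟫ ≥ 0`, so both
`‖x n - z‖` and `‖b n - w‖` are bounded by that distance.
-/

section InnerProduct

variable {X : Type*} [NormedAddCommGroup X] [InnerProductSpace ℝ X]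

lemma norm_le_norm_add_of_inner_nonneg {c d : X} (h : 0 ≤ inner ℝ c d) :
    ‖c‖ ≤ ‖c + d‖ := by
  have hsq : ‖c‖ ^ 2 ≤ ‖c + d‖ ^ 2 := by
    rw [norm_add_sq_real]
    nlinarith [norm_nonneg d]
  exact (pow_le_pow_iff_left₀ (norm_nonneg c) (norm_nonneg _) two_ne_zero).1 hsq

lemma norm_le_of_inner_sub_nonneg {u v : X} (h : 0 ≤ inner ℝ v (u - v)) : ‖v‖ ≤ ‖u‖ := by
  simpa using norm_le_norm_add_of_inner_nonneg h

lemma inner_add_inner_sub_sub (p q v : X) :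
    inner ℝ p q + inner ℝ (v - q) (p - v) = (inner ℝ v (p + q - v) : ℝ) := by
  simp only [inner_sub_left, inner_sub_right, inner_add_right]
  rw [real_inner_comm q p, real_inner_comm q v, real_inner_comm p v]
  ring

end InnerProduct

section DouglasRachford

variable {X : Type*} [NormedAddCommGroup X] [InnerProductSpace ℝ X]
  {A B : Set (X × X)} {z w : X}

lemma norm_sub_le_norm_add_sub_of_mem_Se (hB : IsMonotoneOp B) (hzw : (z, w) ∈ Se A B)
    {u v : X} (huv : (u, v) ∈ B) :
    ‖u - z‖ ≤ ‖u + v - (z + w)‖ ∧ ‖v - w‖ ≤ ‖u + v - (z + w)‖ := by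
  have hmono : 0 ≤ inner ℝ (u - z) (v - w) := hB _ huv _ hzw.1
  have hsum : u - z + (v - w) = u + v - (z + w) := by abel
  refine ⟨hsum ▸ norm_le_norm_add_of_inner_nonneg hmono, ?_⟩
  rw [← hsum, add_comm]
  exact norm_le_norm_add_of_inner_nonneg (real_inner_comm (u - z) (v - w) ▸ hmono)

/-- One Douglas–Rachford step with stepsize one, written in the variables of the previous
`B`-pair `(p, q)` and the new pair `(u, v)`: the intermediate `A`-pair is
`(u + v - q, p - u - v)`. -/
lemma norm_dr_step_le (hA : IsMonotoneOp A) (hB : IsMonotoneOp B) (hzw : (z, w) ∈ Se A B)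
    {p q u v : X} (hpq : (p, q) ∈ B) (hA_step : (u + v - q, p - u - v) ∈ A) :
    ‖u + v - (z + w)‖ ≤ ‖p + q - (z + w)‖ := by
  have hmonoB : 0 ≤ inner ℝ (p - z) (q - w) := hB _ hpq _ hzw.1
  have hmonoA : 0 ≤ inner ℝ (u + v - q - z) (p - u - v - -w) := hA _ hA_step _ hzw.2
  apply norm_le_of_inner_sub_nonneg
  have key := inner_add_inner_sub_sub (p - z) (q - w) (u + v - (z + w))
  have e1 : u + v - (z + w) - (q - w) = u + v - q - z := by abel
  have e2 : p - z - (u + v - (z + w)) = p - u - v - -w := by abel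
  have e3 : p - z + (q - w) = p + q - (z + w) := by abel
  rw [e1, e2, e3] at key
  linarith

lemma IsDR.norm_succ_sub_le {y a x b : ℕ → X} (hDR : IsDR A B 1 y a x b)
    (hA : IsMonotoneOp A) (hB : IsMonotoneOp B) (hzw : (z, w) ∈ Se A B) {n : ℕ} (hn : 1 ≤ n) :
    ‖x (n + 1) + b (n + 1) - (z + w)‖ ≤ ‖x n + b n - (z + w)‖ := by
  obtain ⟨hyA, hy, -, hx⟩ := hDR (n + 1) (by omega)
  have hpq := (hDR n hn).2.2.1
  simp only [one_smul, Nat.add_sub_cancel] at hy hx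
  have hy_eq : y (n + 1) = x (n + 1) + b (n + 1) - b n :=
    eq_sub_of_add_eq (hx.symm.trans (add_comm _ _))
  have ha_eq : a (n + 1) = x n - x (n + 1) - b (n + 1) := by
    rw [eq_sub_of_add_eq hy, hy_eq]; abel
  rw [hy_eq, ha_eq] at hyA
  exact norm_dr_step_le hA hB hzw hpq hyA

end DouglasRachford

theorem dr_bounded_general {X : Type*} [NormedAddCommGroup X] [InnerProductSpace ℝ X]
    (A B : Set (X × X))
    (hA : IsMaxMonotone A) (hB : IsMaxMonotone B)
    (y a x b : ℕ → X) (hDR : IsDR A B 1 y a x b)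
    (hne : (Se A B).Nonempty) :
    ∃ M : ℝ, ∀ n, ‖x n‖ ≤ M ∧ ‖b n‖ ≤ M := by
  obtain ⟨⟨z, w⟩, hzw⟩ := hne
  set C := ‖x 1 + b 1 - (z + w)‖
  have hfejer : AntitoneOn (fun n => ‖x n + b n - (z + w)‖) {n | 1 ≤ n} :=
    antitoneOn_nat_Ici_of_succ_le fun n hn => hDR.norm_succ_sub_le hA.1 hB.1 hzw hn
  refine ⟨max (max ‖x 0‖ ‖b 0‖) (‖z‖ + ‖w‖ + C), fun n => ?_⟩
  rcases Nat.eq_zero_or_pos n with rfl | hn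
  · exact ⟨le_max_of_le_left (le_max_left _ _), le_max_of_le_left (le_max_right _ _)⟩
  have hC : ‖x n + b n - (z + w)‖ ≤ C := hfejer (le_refl 1) hn hn
  obtain ⟨hxz, hbw⟩ := norm_sub_le_norm_add_sub_of_mem_Se hB.1 hzw (hDR n hn).2.2.1
  have hx := norm_le_norm_add_norm_sub' (x n) z
  have hb := norm_le_norm_add_norm_sub' (b n) w
  constructor <;> refine le_max_of_le_right ?_ <;>
    linarith [norm_nonneg z, norm_nonneg w]

/-- If `S_e(A,B) ≠ ∅` then the sequences `(x_n)` and `(b_n)` are bounded. -/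
theorem dr_bounded {X : Type*} [NormedAddCommGroup X] [InnerProductSpace ℝ X]
    [CompleteSpace X] (A B : Set (X × X))
    (hA : IsMaxMonotone A) (hB : IsMaxMonotone B)
    (y a x b : ℕ → X) (hDR : IsDR A B 1 y a x b)
    (hne : (Se A B).Nonempty) :
    ∃ M : ℝ, ∀ n, ‖x n‖ ≤ M ∧ ‖b n‖ ≤ M :=
  dr_bounded_general A B hA hB y a x b hDR hne
end
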